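/- arXiv:2105.15177 — 6 statements merged into one kernel-verified Lean document; each statement's English description precedes it below -/
import Mathlib

section
/- Let 0 < a < 1. There exists a constant C(a) such that for all natural numbers r and t with t ≥ 2r, the sum S(a,r,t) = ∑_{k=r+1}^{t} k^{-a}(k-r)^{a-1} satisfies S(a,r,t) ≤ C(a)(H_t − H_r), where H_m = ∑_{n=1}^{m} 1/n denotes the m-th harmonic number (with H_0 = 0). -/
/-- The `m`-th harmonic number `H_m = ∑_{n=1}^m 1/n` (with `H 0 = 0`). -/
noncomputable def harmonic' (m : ℕ) : ℝ := ∑ n ∈ Finset.Icc 1 m, (1 : ℝ) / n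

/-- Concavity/Bernoulli step: `a * x^(a-1) ≤ x^a - (x-1)^a` for `x ≥ 1`. -/
lemma aux_bernoulli (a : ℝ) (ha0 : 0 < a) (ha1 : a < 1) (x : ℝ) (hx : 1 ≤ x) :
    a * x ^ (a - 1) ≤ x ^ a - (x - 1) ^ a := by
  have hx0 : 0 < x := lt_of_lt_of_le one_pos hx
  have hs : -1 ≤ -(1 / x) := by
    rw [neg_le_neg_iff]
    exact div_le_one_of_le₀ hx hx0.le
  have hb := rpow_one_add_le_one_add_mul_self hs ha0.le ha1.le
  have h1 : (1 : ℝ) + -(1 / x) = (x - 1) / x := by field_simp; ring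
  rw [h1] at hb
  have h2 : ((x - 1) / x) ^ a = (x - 1) ^ a / x ^ a :=
    Real.div_rpow (by linarith) hx0.le a
  rw [h2] at hb
  have hxa : (0 : ℝ) < x ^ a := Real.rpow_pos_of_pos hx0 a
  have hb' : (x - 1) ^ a ≤ (1 + a * -(1 / x)) * x ^ a := by
    rw [div_le_iff₀ hxa] at hb; linarith
  have h3 : (1 + a * -(1 / x)) * x ^ a = x ^ a - a * (x ^ a / x) := by ring
  have h4 : x ^ a / x = x ^ (a - 1) := by
    rw [Real.rpow_sub hx0, Real.rpow_one]
  rw [h3, h4] at hb'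
  linarith

/-- Telescoping bound: `∑_{j=1}^r j^(a-1) ≤ r^a / a`. -/
lemma aux_telescope (a : ℝ) (ha0 : 0 < a) (ha1 : a < 1) (r : ℕ) :
    ∑ j ∈ Finset.Icc 1 r, (j : ℝ) ^ (a - 1) ≤ (r : ℝ) ^ a / a := by
  rw [le_div_iff₀ ha0]
  have hstep : ∀ j ∈ Finset.Icc 1 r,
      (j : ℝ) ^ (a - 1) * a ≤ (j : ℝ) ^ a - ((j : ℝ) - 1) ^ a := by
    intro j hj
    have hj1 : (1 : ℝ) ≤ (j : ℝ) := by exact_mod_cast (Finset.mem_Icc.mp hj).1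
    have := aux_bernoulli a ha0 ha1 (j : ℝ) hj1
    linarith
  calc (∑ j ∈ Finset.Icc 1 r, (j : ℝ) ^ (a - 1)) * a
      = ∑ j ∈ Finset.Icc 1 r, (j : ℝ) ^ (a - 1) * a := by rw [Finset.sum_mul]
    _ ≤ ∑ j ∈ Finset.Icc 1 r, ((j : ℝ) ^ a - ((j : ℝ) - 1) ^ a) := Finset.sum_le_sum hstep
    _ = (r : ℝ) ^ a := by
        rw [← Finset.Ico_add_one_right_eq_Icc, Finset.sum_Ico_eq_sum_range]
        have ht := Finset.sum_range_sub (fun n : ℕ => (n : ℝ) ^ a) r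
        simp only [Nat.cast_zero, Real.zero_rpow ha0.ne', sub_zero] at ht
        rw [show r + 1 - 1 = r from by omega, ← ht]
        refine Finset.sum_congr rfl fun i _ => ?_
        push_cast
        ring_nf

theorem stmt0 (a : ℝ) (ha0 : 0 < a) (ha1 : a < 1) :
    ∃ C : ℝ, 0 < C ∧ ∀ r t : ℕ, 2 * r ≤ t →
      ∑ k ∈ Finset.Icc (r + 1) t, (k : ℝ) ^ (-a) * ((k : ℝ) - (r : ℝ)) ^ (a - 1)
        ≤ C * (harmonic' t - harmonic' r) := by
  refine ⟨2 / a + 2 ^ (1 - a), by positivity, ?_⟩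
  intro r t hrt
  have hr2 : r ≤ 2 * r := by omega
  have hrt' : r ≤ t := le_trans hr2 hrt
  have hharm : ∀ m : ℕ, harmonic' m = ∑ n ∈ Finset.Ioc 0 m, (1 : ℝ) / n := by
    intro m; unfold harmonic'; rw [← Finset.Icc_add_one_left_eq_Ioc, zero_add]
  have hH : harmonic' t - harmonic' r = ∑ k ∈ Finset.Ioc r t, (1 : ℝ) / k := by
    rw [hharm t, hharm r,
      ← Finset.sum_Ioc_consecutive (fun n : ℕ => (1 : ℝ) / n) (Nat.zero_le r) hrt']
    ring
  have hHnn : 0 ≤ harmonic' t - harmonic' r := by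
    rw [hH]; exact Finset.sum_nonneg fun k _ => by positivity
  rw [Finset.Icc_add_one_left_eq_Ioc,
    ← Finset.sum_Ioc_consecutive (fun k : ℕ => (k : ℝ) ^ (-a) * ((k : ℝ) - (r : ℝ)) ^ (a - 1))
      hr2 hrt]
  -- Part B : sum over Ioc (2r) t
  have partB : ∑ k ∈ Finset.Ioc (2 * r) t, (k : ℝ) ^ (-a) * ((k : ℝ) - (r : ℝ)) ^ (a - 1)
      ≤ 2 ^ (1 - a) * (harmonic' t - harmonic' r) := by
    have step : ∀ k ∈ Finset.Ioc (2 * r) t,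
        (k : ℝ) ^ (-a) * ((k : ℝ) - (r : ℝ)) ^ (a - 1) ≤ 2 ^ (1 - a) * (1 / k) := by
      intro k hk
      obtain ⟨hk1, _⟩ := Finset.mem_Ioc.mp hk
      have hk1' : (2 : ℝ) * r < k := by exact_mod_cast hk1
      have hkpos : (0 : ℝ) < k := by
        have : 0 < k := by omega
        exact_mod_cast this
      have hkr : (k : ℝ) / 2 ≤ (k : ℝ) - r := by linarith
      have h1 : ((k : ℝ) - r) ^ (a - 1) ≤ ((k : ℝ) / 2) ^ (a - 1) :=
        Real.rpow_le_rpow_of_nonpos (by positivity) hkr (by linarith)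
      have e1 : ((k : ℝ) / 2) ^ (a - 1) = (k : ℝ) ^ (a - 1) * ((2 : ℝ) ^ (a - 1))⁻¹ := by
        rw [Real.div_rpow hkpos.le (by norm_num : (0:ℝ) ≤ 2) (a - 1), div_eq_mul_inv]
      have e2 : (k : ℝ) ^ (-a) * (k : ℝ) ^ (a - 1) = ((k : ℝ))⁻¹ := by
        rw [← Real.rpow_add hkpos, show -a + (a - 1) = -1 by ring, Real.rpow_neg_one]
      have e3 : (2 : ℝ) ^ (1 - a) = ((2 : ℝ) ^ (a - 1))⁻¹ := by
        rw [show (1 - a : ℝ) = -(a - 1) by ring, Real.rpow_neg (by norm_num)]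
      calc (k : ℝ) ^ (-a) * ((k : ℝ) - r) ^ (a - 1)
          ≤ (k : ℝ) ^ (-a) * ((k : ℝ) / 2) ^ (a - 1) :=
            mul_le_mul_of_nonneg_left h1 (Real.rpow_nonneg hkpos.le _)
        _ = 2 ^ (1 - a) * (1 / k) := by
            rw [e1, ← mul_assoc, e2, e3, one_div]; ring
    calc ∑ k ∈ Finset.Ioc (2 * r) t, (k : ℝ) ^ (-a) * ((k : ℝ) - (r : ℝ)) ^ (a - 1)
        ≤ ∑ k ∈ Finset.Ioc (2 * r) t, 2 ^ (1 - a) * (1 / (k : ℝ)) := Finset.sum_le_sum step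
      _ = 2 ^ (1 - a) * ∑ k ∈ Finset.Ioc (2 * r) t, (1 / (k : ℝ)) := by rw [Finset.mul_sum]
      _ ≤ 2 ^ (1 - a) * ∑ k ∈ Finset.Ioc r t, (1 / (k : ℝ)) := by
          apply mul_le_mul_of_nonneg_left _ (by positivity)
          apply Finset.sum_le_sum_of_subset_of_nonneg (Finset.Ioc_subset_Ioc_left hr2)
          intro k _ _; positivity
      _ = 2 ^ (1 - a) * (harmonic' t - harmonic' r) := by rw [hH]
  -- Part A : sum over Ioc r (2r)
  have partA : ∑ k ∈ Finset.Ioc r (2 * r), (k : ℝ) ^ (-a) * ((k : ℝ) - (r : ℝ)) ^ (a - 1)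
      ≤ 2 / a * (harmonic' t - harmonic' r) := by
    rcases Nat.eq_zero_or_pos r with hr0 | hrpos
    · subst hr0
      simp only [Nat.mul_zero, Finset.Ioc_self, Finset.sum_empty]
      exact mul_nonneg (by positivity) hHnn
    have hrR : (0 : ℝ) < r := by exact_mod_cast hrpos
    -- pointwise bound
    have step : ∀ k ∈ Finset.Ioc r (2 * r),
        (k : ℝ) ^ (-a) * ((k : ℝ) - (r : ℝ)) ^ (a - 1)
          ≤ (r : ℝ) ^ (-a) * ((k : ℝ) - (r : ℝ)) ^ (a - 1) := by
      intro k hk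
      obtain ⟨hk1, _⟩ := Finset.mem_Ioc.mp hk
      have hk1' : (r : ℝ) < k := by exact_mod_cast hk1
      refine mul_le_mul_of_nonneg_right
        (Real.rpow_le_rpow_of_nonpos hrR hk1'.le (by linarith)) ?_
      exact Real.rpow_nonneg (by linarith) _
    -- reindexing
    have reidx : ∑ k ∈ Finset.Ioc r (2 * r), ((k : ℝ) - (r : ℝ)) ^ (a - 1)
        = ∑ j ∈ Finset.Icc 1 r, (j : ℝ) ^ (a - 1) := by
      rw [← Finset.Icc_add_one_left_eq_Ioc, ← Finset.Ico_add_one_right_eq_Icc, ← Finset.Ico_add_one_right_eq_Icc,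
        Finset.sum_Ico_eq_sum_range, Finset.sum_Ico_eq_sum_range]
      rw [show 2 * r + 1 - (r + 1) = r from by omega, show r + 1 - 1 = r from by omega]
      refine Finset.sum_congr rfl fun i _ => ?_
      push_cast [Nat.succ_eq_add_one]
      ring_nf
    -- the 1/2 lower bound on the harmonic difference
    have hhalf : (1 : ℝ) / 2 ≤ harmonic' t - harmonic' r := by
      rw [hH]
      have h1 : ∑ k ∈ Finset.Ioc r (2 * r), (1 : ℝ) / k
          ≤ ∑ k ∈ Finset.Ioc r t, (1 : ℝ) / k := by
        apply Finset.sum_le_sum_of_subset_of_nonneg (Finset.Ioc_subset_Ioc_right hrt)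
        intro k _ _; positivity
      have h2 : ∑ k ∈ Finset.Ioc r (2 * r), (1 : ℝ) / (2 * r)
          ≤ ∑ k ∈ Finset.Ioc r (2 * r), (1 : ℝ) / k := by
        refine Finset.sum_le_sum fun k hk => ?_
        obtain ⟨hk1, hk2⟩ := Finset.mem_Ioc.mp hk
        have hk1' : (0 : ℝ) < k := by
          have : (r : ℝ) < k := by exact_mod_cast hk1
          linarith
        have hk2' : (k : ℝ) ≤ 2 * r := by exact_mod_cast hk2
        exact one_div_le_one_div_of_le hk1' hk2'
      have h3 : ∑ k ∈ Finset.Ioc r (2 * r), (1 : ℝ) / (2 * r) = 1 / 2 := by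
        rw [Finset.sum_const, Nat.card_Ioc, show 2 * r - r = r from by omega,
          nsmul_eq_mul]
        field_simp
      linarith
    calc ∑ k ∈ Finset.Ioc r (2 * r), (k : ℝ) ^ (-a) * ((k : ℝ) - (r : ℝ)) ^ (a - 1)
        ≤ ∑ k ∈ Finset.Ioc r (2 * r), (r : ℝ) ^ (-a) * ((k : ℝ) - (r : ℝ)) ^ (a - 1) :=
          Finset.sum_le_sum step
      _ = (r : ℝ) ^ (-a) * ∑ j ∈ Finset.Icc 1 r, (j : ℝ) ^ (a - 1) := by
          rw [← Finset.mul_sum, reidx]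
      _ ≤ (r : ℝ) ^ (-a) * ((r : ℝ) ^ a / a) := by
          exact mul_le_mul_of_nonneg_left (aux_telescope a ha0 ha1 r)
            (Real.rpow_nonneg hrR.le _)
      _ = 1 / a := by
          rw [← mul_div_assoc, ← Real.rpow_add hrR, show -a + a = 0 by ring,
            Real.rpow_zero]
      _ = 2 / a * (1 / 2) := by ring
      _ ≤ 2 / a * (harmonic' t - harmonic' r) :=
          mul_le_mul_of_nonneg_left hhalf (by positivity)
  have : (2 / a + 2 ^ (1 - a)) * (harmonic' t - harmonic' r)
      = 2 / a * (harmonic' t - harmonic' r) + 2 ^ (1 - a) * (harmonic' t - harmonic' r) := by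
    ring
  rw [this]
  exact add_le_add partA partB
end

section
/- Let ∑_{n=1}^∞ c_n be a divergent series of nonnegative real terms with lim_n c_n = 0. Then for every natural number m and all real numbers 0 ≤ a < b, there exist natural numbers r, s with m ≤ r < s such that a ≤ ∑_{n=r+1}^{s} c_n < b. -/
theorem stmt1 (c : ℕ → ℝ) (hnonneg : ∀ n, 0 ≤ c n)
    (hdiv : Filter.Tendsto (fun N => ∑ n ∈ Finset.Icc 1 N, c n) Filter.atTop Filter.atTop)
    (hto0 : Filter.Tendsto c Filter.atTop (nhds 0)) :
    ∀ m : ℕ, ∀ a b : ℝ, 0 ≤ a → a < b →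
      ∃ r s : ℕ, m ≤ r ∧ r < s ∧
        a ≤ ∑ n ∈ Finset.Icc (r + 1) s, c n ∧ ∑ n ∈ Finset.Icc (r + 1) s, c n < b := by
  classical
  intro m a b ha hab
  have hba : 0 < b - a := by linarith
  obtain ⟨N, hN⟩ := Metric.tendsto_atTop.mp hto0 (b - a) hba
  set r := max m N with hrdef
  have hrm : m ≤ r := le_max_left _ _
  have hsmall : ∀ n, r < n → c n < b - a := by
    intro n hn
    have h := hN n (le_trans (le_max_right m N) hn.le)
    rwa [Real.dist_eq, sub_zero, abs_of_nonneg (hnonneg n)] at h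
  have hex : ∃ s, r < s ∧ a ≤ ∑ n ∈ Finset.Icc (r + 1) s, c n := by
    obtain ⟨M, hM⟩ := Filter.eventually_atTop.mp (Filter.tendsto_atTop.mp hdiv (a + ∑ n ∈ Finset.Icc 1 r, c n))
    refine ⟨max (r + 1) M, lt_of_lt_of_le (Nat.lt_succ_self r) (le_max_left _ _), ?_⟩
    have hM' := hM (max (r + 1) M) (le_max_right _ _)
    have hsplit : ∑ n ∈ Finset.Icc 1 r, c n
        + ∑ n ∈ Finset.Icc (r + 1) (max (r + 1) M), c n
        = ∑ n ∈ Finset.Icc 1 (max (r + 1) M), c n := by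
      have h2 : r ≤ max (r + 1) M := le_trans (Nat.le_succ r) (le_max_left _ _)
      simpa [← Finset.Icc_add_one_left_eq_Ioc] using
        Finset.sum_Ioc_consecutive c (Nat.zero_le r) h2
    linarith
  obtain ⟨hrs, has⟩ := Nat.find_spec hex
  set s := Nat.find hex with hsdef
  refine ⟨r, s, hrm, hrs, has, ?_⟩
  have hcs := hsmall s hrs
  by_cases hcase : s = r + 1
  · have hsum : ∑ n ∈ Finset.Icc (r + 1) s, c n = c s := by
      rw [hcase]; simp
    rw [hsum]; linarith
  · have hs2 : r + 1 < s := lt_of_le_of_ne hrs (fun h => hcase h.symm)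
    have hlt : s - 1 < s := Nat.sub_lt (by omega : 0 < s) one_pos
    have hmin := Nat.find_min hex hlt
    push_neg at hmin
    have hr1 : r < s - 1 := by omega
    have hsum1 : ∑ n ∈ Finset.Icc (r + 1) (s - 1), c n < a := hmin hr1
    have hsucc : s - 1 + 1 = s := by omega
    have hsplit : ∑ n ∈ Finset.Icc (r + 1) s, c n
        = ∑ n ∈ Finset.Icc (r + 1) (s - 1), c n + c s := by
      rw [← hsucc]
      exact Finset.sum_Icc_succ_top (by omega) c
    linarith
end

section
/- Let (s_m)_{m=1}^∞ be a non-decreasing sequence of positive reals satisfying the lower regularity property: there exists an integer b ≥ 2 with 2 s_m ≤ s_{bm} for all m. Then there exist a > 0 and C ≥ 1 such that for all natural numbers n ≤ m, (m/n)^a ≤ C · s_m / s_n. -/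
theorem stmt4 (s : ℕ → ℝ) (hpos : ∀ m : ℕ, 1 ≤ m → 0 < s m)
    (hmono : ∀ m n : ℕ, m ≤ n → s m ≤ s n)
    (b : ℕ) (hb : 2 ≤ b) (hLRP : ∀ m : ℕ, 1 ≤ m → 2 * s m ≤ s (b * m)) :
    ∃ a C : ℝ, 0 < a ∧ 1 ≤ C ∧
      ∀ n m : ℕ, 1 ≤ n → n ≤ m → ((m : ℝ) / (n : ℝ)) ^ a ≤ C * s m / s n := by
  have hb1 : (1:ℝ) < (b:ℝ) := by exact_mod_cast lt_of_lt_of_le one_lt_two hb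
  have hlogb : 0 < Real.log b := Real.log_pos hb1
  set a : ℝ := Real.log 2 / Real.log b with ha
  have hapos : 0 < a := div_pos (Real.log_pos one_lt_two) hlogb
  have hba : (b:ℝ) ^ a = 2 := by
    rw [ha, Real.rpow_def_of_pos (by linarith), mul_div_cancel₀ _ (ne_of_gt hlogb),
      Real.exp_log two_pos]
  -- key iteration lemma
  have key : ∀ k n : ℕ, 1 ≤ n → 2 ^ k * s n ≤ s (b ^ k * n) := by
    intro k
    induction k with
    | zero => intro n hn; simp
    | succ k ih =>
      intro n hn
      have h1 : 1 ≤ b ^ k * n := Nat.one_le_iff_ne_zero.mpr (by positivity)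
      have h2 := hLRP (b ^ k * n) h1
      have h3 := ih n hn
      calc 2 ^ (k+1) * s n = 2 * (2 ^ k * s n) := by ring
        _ ≤ 2 * s (b ^ k * n) := by nlinarith
        _ ≤ s (b * (b ^ k * n)) := h2
        _ = s (b ^ (k+1) * n) := by ring_nf
  refine ⟨a, 2, hapos, one_le_two, ?_⟩
  intro n m hn hnm
  have hm : 1 ≤ m := le_trans hn hnm
  have hnpos : 0 < n := hn
  have hsn := hpos n hn
  set k := Nat.log b (m / n) with hk
  have hdiv1 : 1 ≤ m / n := (Nat.one_le_div_iff hnpos).mpr hnm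
  have hlow : b ^ k ≤ m / n := Nat.pow_log_le_self b (by omega)
  have hlow' : b ^ k * n ≤ m := by
    calc b ^ k * n ≤ (m / n) * n := Nat.mul_le_mul_right n hlow
      _ ≤ m := Nat.div_mul_le_self m n
  have hhigh : m / n < b ^ (k+1) := Nat.lt_pow_succ_log_self (by omega) _
  have hhigh' : m < b ^ (k+1) * n := (Nat.div_lt_iff_lt_mul hnpos).mp hhigh
  have hratio : (m:ℝ) / (n:ℝ) ≤ (b:ℝ) ^ (k+1) := by
    rw [div_le_iff₀ (by exact_mod_cast hnpos)]
    exact_mod_cast hhigh'.le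
  have h0 : (0:ℝ) ≤ (m:ℝ) / (n:ℝ) := by positivity
  have step1 : ((m:ℝ)/(n:ℝ)) ^ a ≤ ((b:ℝ) ^ (k+1)) ^ a :=
    Real.rpow_le_rpow h0 hratio hapos.le
  have step2 : ((b:ℝ) ^ (k+1) : ℝ) ^ a = 2 ^ (k+1) := by
    rw [← Real.rpow_natCast (b:ℝ) (k+1), ← Real.rpow_mul (by linarith), mul_comm,
      Real.rpow_mul (by linarith), hba, Real.rpow_natCast]
  have step3 : (2:ℝ) ^ k * s n ≤ s m :=
    le_trans (key k n hn) (hmono _ _ hlow')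
  have : ((m:ℝ)/(n:ℝ)) ^ a ≤ 2 ^ (k+1) := step2 ▸ step1
  rw [le_div_iff₀ hsn]
  calc ((m:ℝ)/(n:ℝ)) ^ a * s n ≤ 2 ^ (k+1) * s n := by nlinarith
    _ = 2 * (2 ^ k * s n) := by ring
    _ ≤ 2 * s m := by nlinarith
end

section
/- Let (s_m)_{m=1}^∞ be a non-decreasing sequence of positive reals such that (s_m/m)_{m=1}^∞ is non-increasing and (s_m) has the lower regularity property (there is an integer b ≥ 2 with 2 s_m ≤ s_{bm} for all m). Then ∑_{n=1}^{m} s_n/n ≈ s_m for m ∈ ℕ, i.e., there are constants c, C > 0 with c·s_m ≤ ∑_{n=1}^{m} s_n/n ≤ C·s_m for all m. -/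
private lemma stmt5_upper (s : ℕ → ℝ) (hpos : ∀ m : ℕ, 1 ≤ m → 0 < s m)
    (hmono : ∀ m n : ℕ, m ≤ n → s m ≤ s n)
    (b : ℕ) (hb : 2 ≤ b) (hLRP : ∀ m : ℕ, 1 ≤ m → 2 * s m ≤ s (b * m)) :
    ∀ m : ℕ, 1 ≤ m → ∑ n ∈ Finset.Icc 1 m, s n / (n : ℝ) ≤ (2 * b) * s m := by
  intro m
  induction m using Nat.strong_induction_on with
  | _ m ih =>
  intro hm
  have hb0 : 0 < b := by omega
  have hsm : 0 ≤ s m := (hpos m hm).le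
  by_cases hmb : m < b
  · -- base case: each term ≤ s m
    calc ∑ n ∈ Finset.Icc 1 m, s n / (n : ℝ)
        ≤ ∑ n ∈ Finset.Icc 1 m, s m := by
          apply Finset.sum_le_sum
          intro n hn
          simp only [Finset.mem_Icc] at hn
          have h1 : (1 : ℝ) ≤ (n : ℝ) := by exact_mod_cast hn.1
          calc s n / (n : ℝ) ≤ s n / 1 := by
                apply div_le_div_of_nonneg_left (hpos n hn.1).le one_pos h1
            _ = s n := by ring
            _ ≤ s m := hmono n m hn.2
      _ = (m : ℝ) * s m := by
          rw [Finset.sum_const, Nat.card_Icc]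
          simp [nsmul_eq_mul]
      _ ≤ (2 * b) * s m := by
          apply mul_le_mul_of_nonneg_right _ hsm
          have : (m : ℝ) ≤ (b : ℝ) := by exact_mod_cast hmb.le
          have hbr : (0 : ℝ) ≤ (b : ℝ) := by positivity
          nlinarith
  · -- m ≥ b
    push_neg at hmb
    set q := m / b with hq
    have hq1 : 1 ≤ q := (Nat.one_le_div_iff hb0).mpr hmb
    have hqm : q < m := Nat.div_lt_self (by omega) (by omega)
    have hbq : b * q ≤ m := by
      rw [hq, mul_comm]; exact Nat.div_mul_le_self m b
    have hmlt : m < b * (q + 1) := by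
      rw [hq]; exact Nat.lt_mul_div_succ m hb0
    -- split the sum
    have hsplit : ∑ n ∈ Finset.Icc 1 m, s n / (n : ℝ)
        = (∑ n ∈ Finset.Icc 1 q, s n / (n : ℝ)) + ∑ n ∈ Finset.Ioc q m, s n / (n : ℝ) := by
      have e : ∀ k : ℕ, Finset.Icc 1 k = Finset.Ioc 0 k := fun k => by
        rw [← Finset.Icc_add_one_left_eq_Ioc]; rfl
      rw [e m, e q]
      rw [show Finset.Ioc 0 m = Finset.Ioc 0 q ∪ Finset.Ioc q m from
        (Finset.Ioc_union_Ioc_eq_Ioc (Nat.zero_le q) hqm.le).symm]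
      rw [Finset.sum_union]
      · simp [Finset.disjoint_left, Finset.mem_Ioc]; omega
    rw [hsplit]
    -- head bound
    have hsq : 2 * s q ≤ s m := le_trans (hLRP q hq1) (hmono _ _ hbq)
    have hhead : ∑ n ∈ Finset.Icc 1 q, s n / (n : ℝ) ≤ (b : ℝ) * s m := by
      calc ∑ n ∈ Finset.Icc 1 q, s n / (n : ℝ) ≤ (2 * b) * s q := ih q hqm hq1
        _ ≤ (b : ℝ) * s m := by nlinarith [hpos q hq1]
    -- tail bound
    have htail : ∑ n ∈ Finset.Ioc q m, s n / (n : ℝ) ≤ (b : ℝ) * s m := by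
      have hcard : (Finset.Ioc q m).card = m - q := Nat.card_Ioc q m
      have hterm : ∀ n ∈ Finset.Ioc q m, s n / (n : ℝ) ≤ s m / ((q : ℝ) + 1) := by
        intro n hn
        simp only [Finset.mem_Ioc] at hn
        have h1 : (0 : ℝ) < (q : ℝ) + 1 := by positivity
        have h2 : ((q : ℝ) + 1) ≤ (n : ℝ) := by exact_mod_cast hn.1
        exact div_le_div₀ hsm (hmono n m hn.2) h1 h2
      calc ∑ n ∈ Finset.Ioc q m, s n / (n : ℝ)
          ≤ ∑ n ∈ Finset.Ioc q m, s m / ((q : ℝ) + 1) := Finset.sum_le_sum hterm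
        _ = ((m - q : ℕ) : ℝ) * (s m / ((q : ℝ) + 1)) := by
            rw [Finset.sum_const, hcard, nsmul_eq_mul]
        _ ≤ (b : ℝ) * s m := by
            have h1 : ((m - q : ℕ) : ℝ) ≤ (m : ℝ) := by
              exact_mod_cast Nat.sub_le m q
            have h2 : (m : ℝ) ≤ (b : ℝ) * ((q : ℝ) + 1) := by
              have := hmlt.le
              
              exact_mod_cast this
            have h3 : (0 : ℝ) < (q : ℝ) + 1 := by positivity
            rw [div_eq_mul_inv]
            have hmq0 : (0:ℝ) ≤ ((m - q : ℕ) : ℝ) := by positivity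
            rw [mul_comm (s m) _, ← mul_assoc]
            apply mul_le_mul _ le_rfl hsm (by positivity)
            rw [mul_inv_le_iff₀ h3]
            calc ((m - q : ℕ) : ℝ) ≤ (m : ℝ) := h1
              _ ≤ (b : ℝ) * ((q : ℝ) + 1) := h2
    calc (∑ n ∈ Finset.Icc 1 q, s n / (n : ℝ)) + ∑ n ∈ Finset.Ioc q m, s n / (n : ℝ)
        ≤ (b : ℝ) * s m + (b : ℝ) * s m := add_le_add hhead htail
      _ = (2 * b) * s m := by  ring

theorem stmt5 (s : ℕ → ℝ) (hpos : ∀ m : ℕ, 1 ≤ m → 0 < s m)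
    (hmono : ∀ m n : ℕ, m ≤ n → s m ≤ s n)
    (hreg : ∀ m n : ℕ, 1 ≤ m → m ≤ n → s n / (n : ℝ) ≤ s m / (m : ℝ))
    (b : ℕ) (hb : 2 ≤ b) (hLRP : ∀ m : ℕ, 1 ≤ m → 2 * s m ≤ s (b * m)) :
    ∃ c C : ℝ, 0 < c ∧ 0 < C ∧ ∀ m : ℕ, 1 ≤ m →
      c * s m ≤ ∑ n ∈ Finset.Icc 1 m, s n / (n : ℝ) ∧
      ∑ n ∈ Finset.Icc 1 m, s n / (n : ℝ) ≤ C * s m := by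
  refine ⟨1, 2 * b, one_pos, by positivity, fun m hm => ⟨?_, ?_⟩⟩
  · have hm0 : (0 : ℝ) < (m : ℝ) := by exact_mod_cast hm
    calc (1 : ℝ) * s m = (m : ℝ) * (s m / (m : ℝ)) := by
          field_simp
      _ = ∑ n ∈ Finset.Icc 1 m, s m / (m : ℝ) := by
          rw [Finset.sum_const, Nat.card_Icc, nsmul_eq_mul]; norm_num
      _ ≤ ∑ n ∈ Finset.Icc 1 m, s n / (n : ℝ) := by
          apply Finset.sum_le_sum
          intro n hn
          simp only [Finset.mem_Icc] at hn
          exact hreg n m hn.1 hn.2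
  · exact stmt5_upper s hpos hmono b hb hLRP m hm
end

section
/- Let q > 1 and let w = (w_n) be a weight whose primitive weight (s_m) has the lower regularity property and is such that (s_m/m) is non-increasing. Then there is a constant C such that for all integers 0 ≤ r ≤ t, the d_{1,q}(w) quasi-norm of ∑_{n=r+1}^{t} (1/s_n) e_n is at most C · max{1, (H_t − H_r)^{1/q}}, where H_m is the m-th harmonic number. -/
theorem stmt6 (q : ℝ) (hq : 1 < q)
    (w : ℕ → ℝ) (hw : ∀ n, 0 ≤ w n) (hw1 : 0 < w 1)
    (s : ℕ → ℝ) (hs : ∀ n, s n = ∑ k ∈ Finset.Icc 1 n, w k)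
    (b : ℕ) (hb : 2 ≤ b) (hLRP : ∀ m : ℕ, 1 ≤ m → 2 * s m ≤ s (b * m))
    (hreg : ∀ m n : ℕ, 1 ≤ m → m ≤ n → s n / (n : ℝ) ≤ s m / (m : ℝ)) :
    ∃ C : ℝ, 0 < C ∧ ∀ r t : ℕ, r ≤ t →
      (∑ k ∈ Finset.Icc (r + 1) t, (1 / s k) ^ q * (s (k - r)) ^ (q - 1) * w (k - r)) ^ (1 / q)
        ≤ C * max 1 ((harmonic' t - harmonic' r) ^ (1 / q)) := by
  have hq0 : (0:ℝ) < q := lt_trans one_pos hq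
  have hq1' : (0:ℝ) ≤ q - 1 := by linarith
  have hmono : ∀ m n : ℕ, m ≤ n → s m ≤ s n := by
    intro m n h
    rw [hs, hs]
    exact Finset.sum_le_sum_of_subset_of_nonneg
      (Finset.Icc_subset_Icc_right h) (fun i _ _ => hw i)
  have hsnn : ∀ k, 0 ≤ s k := by
    intro k; rw [hs]; exact Finset.sum_nonneg fun i _ => hw i
  have hs1 : s 1 = w 1 := by rw [hs]; simp
  have hspos : ∀ k, 1 ≤ k → 0 < s k := fun k hk =>
    lt_of_lt_of_le (hs1 ▸ hw1) (hmono 1 k hk)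
  -- key pointwise fact: n * w n ≤ s n for n ≥ 2
  have hws : ∀ n : ℕ, 2 ≤ n → (n : ℝ) * w n ≤ s n := by
    intro n hn
    obtain ⟨m, rfl⟩ : ∃ m, n = m + 1 := ⟨n - 1, by omega⟩
    have hm1 : 1 ≤ m := by omega
    have hstep : s (m + 1) = s m + w (m + 1) := by
      rw [hs, hs, Finset.sum_Icc_succ_top (by omega : 1 ≤ m + 1)]
    have hreg' := hreg m (m + 1) hm1 (by omega)
    have hmpos : (0:ℝ) < (m:ℝ) := by exact_mod_cast hm1
    have hm1pos : (0:ℝ) < ((m:ℝ) + 1) := by positivity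
    rw [div_le_div_iff₀ (by exact_mod_cast hm1pos) hmpos] at hreg'
    push_cast at hreg' ⊢
    nlinarith [hreg', hstep]
  -- rpow simplification
  have key : ∀ c : ℝ, 0 < c → (1 / c) ^ q * c ^ (q - 1) = 1 / c := by
    intro c hc
    rw [one_div, Real.inv_rpow hc.le, ← Real.rpow_neg hc.le, ← Real.rpow_add hc,
      show -q + (q - 1) = (-1:ℝ) by ring, Real.rpow_neg_one]
  refine ⟨2, two_pos, fun r t hrt => ?_⟩
  set m0 := max r 1 with hm0
  have hrm0 : r ≤ m0 := le_max_left _ _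
  have h1m0 : 1 ≤ m0 := le_max_right _ _
  set u := min t (r + m0) with hu
  have hru : r ≤ u := by omega
  have hut : u ≤ t := by omega
  set f : ℕ → ℝ := fun k => (1 / s k) ^ q * (s (k - r)) ^ (q - 1) * w (k - r) with hf
  have hf0 : ∀ k, 0 ≤ f k := by
    intro k
    have h1 : (0:ℝ) ≤ (1 / s k) ^ q := Real.rpow_nonneg (div_nonneg zero_le_one (hsnn k)) _
    have h2 : (0:ℝ) ≤ (s (k - r)) ^ (q - 1) := Real.rpow_nonneg (hsnn _) _
    exact mul_nonneg (mul_nonneg h1 h2) (hw _)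
  -- harmonic sums as Ioc sums
  have hharm : ∀ a c : ℕ, a ≤ c →
      harmonic' c - harmonic' a = ∑ n ∈ Finset.Ioc a c, (1:ℝ)/n := by
    intro a c hac
    have := Finset.sum_Ioc_consecutive (fun n : ℕ => (1:ℝ)/n) (Nat.zero_le a) hac
    unfold harmonic'
    rw [show Finset.Icc 1 c = Finset.Ioc 0 c from Finset.Icc_add_one_left_eq_Ioc 0 c,
      show Finset.Icc 1 a = Finset.Ioc 0 a from Finset.Icc_add_one_left_eq_Ioc 0 a]
    linarith [this]
  set D := harmonic' t - harmonic' r with hD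
  have hDeq : D = ∑ n ∈ Finset.Ioc r t, (1:ℝ)/n := hharm r t hrt
  have hD0 : 0 ≤ D := by
    rw [hDeq]; exact Finset.sum_nonneg fun i _ => by positivity
  -- reindexing lemma
  have reidx : ∀ (a c : ℕ) (g : ℕ → ℝ),
      ∑ k ∈ Finset.Ioc (r+a) (r+c), g (k - r) = ∑ n ∈ Finset.Ioc a c, g n := by
    intro a c g
    rw [← Finset.map_add_left_Ioc, Finset.sum_map]
    simp
  -- pointwise bound on the first block
  have boundA : ∀ k ∈ Finset.Ioc r u, f k ≤ w (k - r) / s m0 := by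
    intro k hk
    rw [Finset.mem_Ioc] at hk
    have hkr : r < k := hk.1
    have hkm0 : k - r ≤ m0 := by omega
    have hm0k : m0 ≤ k := by omega
    have hc1 : 1 ≤ k - r := by omega
    have hsm0 : 0 < s m0 := hspos m0 h1m0
    have hsk : 0 < s k := hspos k (by omega)
    have h1 : (1 / s k) ^ q ≤ (1 / s m0) ^ q :=
      Real.rpow_le_rpow (div_nonneg zero_le_one (hsnn k))
        (one_div_le_one_div_of_le hsm0 (hmono m0 k hm0k)) hq0.le
    have h2 : (s (k - r)) ^ (q - 1) ≤ (s m0) ^ (q - 1) :=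
      Real.rpow_le_rpow (hsnn _) (hmono _ _ hkm0) hq1'
    have h3 : f k ≤ (1 / s m0) ^ q * (s m0) ^ (q - 1) * w (k - r) := by
      apply mul_le_mul_of_nonneg_right _ (hw _)
      exact mul_le_mul h1 h2 (Real.rpow_nonneg (hsnn _) _) (Real.rpow_nonneg (div_nonneg zero_le_one (hsnn m0)) _)
    calc f k ≤ (1 / s m0) ^ q * (s m0) ^ (q - 1) * w (k - r) := h3
      _ = w (k - r) / s m0 := by rw [key (s m0) hsm0]; ring
  -- pointwise bound on the second block
  have boundB : ∀ k ∈ Finset.Ioc (r + m0) t, f k ≤ 1 / ((k - r : ℕ) : ℝ) := by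
    intro k hk
    rw [Finset.mem_Ioc] at hk
    have hc2 : 2 ≤ k - r := by omega
    have hc1 : 1 ≤ k - r := by omega
    have hsc : 0 < s (k - r) := hspos _ hc1
    have hsk : 0 < s k := hspos k (by omega)
    have hcpos : (0:ℝ) < ((k - r : ℕ) : ℝ) := by exact_mod_cast hc1
    have h1 : (1 / s k) ^ q ≤ (1 / s (k - r)) ^ q :=
      Real.rpow_le_rpow (div_nonneg zero_le_one (hsnn k))
        (one_div_le_one_div_of_le hsc (hmono _ _ (by omega))) hq0.le
    have h3 : f k ≤ (1 / s (k - r)) ^ q * (s (k - r)) ^ (q - 1) * w (k - r) := by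
      apply mul_le_mul_of_nonneg_right _ (hw _)
      exact mul_le_mul_of_nonneg_right h1 (Real.rpow_nonneg (hsnn _) _)
    have h4 : (1 / s (k - r)) ^ q * (s (k - r)) ^ (q - 1) * w (k - r)
        = w (k - r) / s (k - r) := by rw [key _ hsc]; ring
    have h5 : w (k - r) / s (k - r) ≤ 1 / ((k - r : ℕ) : ℝ) := by
      rw [div_le_div_iff₀ hsc hcpos]
      nlinarith [hws (k - r) hc2]
    linarith [h3, h4 ▸ h3]
  -- first block sum ≤ 1
  have part1 : ∑ k ∈ Finset.Ioc r u, f k ≤ 1 := by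
    have hsm0 : 0 < s m0 := hspos m0 h1m0
    calc ∑ k ∈ Finset.Ioc r u, f k
        ≤ ∑ k ∈ Finset.Ioc r u, w (k - r) / s m0 := Finset.sum_le_sum boundA
      _ ≤ ∑ k ∈ Finset.Ioc r (r + m0), w (k - r) / s m0 := by
          apply Finset.sum_le_sum_of_subset_of_nonneg
          · apply Finset.Ioc_subset_Ioc_right; omega
          · intro i _ _; exact div_nonneg (hw _) (hsnn _)
      _ = ∑ n ∈ Finset.Ioc 0 m0, w n / s m0 := by
          have := reidx 0 m0 (fun n => w n / s m0)
          simpa using this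
      _ = (∑ n ∈ Finset.Ioc 0 m0, w n) / s m0 := by rw [Finset.sum_div]
      _ = s m0 / s m0 := by
          rw [hs m0, show Finset.Icc 1 m0 = Finset.Ioc 0 m0 from Finset.Icc_add_one_left_eq_Ioc 0 m0]
      _ = 1 := div_self hsm0.ne'
  -- second block sum ≤ D
  have part2 : ∑ k ∈ Finset.Ioc u t, f k ≤ D := by
    calc ∑ k ∈ Finset.Ioc u t, f k
        ≤ ∑ k ∈ Finset.Ioc (r + m0) t, f k := by
          apply Finset.sum_le_sum_of_subset_of_nonneg
          · intro k hk
            rw [Finset.mem_Ioc] at hk ⊢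
            omega
          · intro i _ _; exact hf0 i
      _ ≤ ∑ k ∈ Finset.Ioc (r + m0) t, 1 / ((k - r : ℕ) : ℝ) := Finset.sum_le_sum boundB
      _ = ∑ n ∈ Finset.Ioc m0 (t - r), 1 / (n : ℝ) := by
          have h := reidx m0 (t - r) (fun n => 1 / (n : ℝ))
          rw [show r + (t - r) = t by omega] at h
          exact h
      _ ≤ ∑ n ∈ Finset.Ioc r t, 1 / (n : ℝ) := by
          apply Finset.sum_le_sum_of_subset_of_nonneg
          · intro n hn
            rw [Finset.mem_Ioc] at hn ⊢
            omega
          · intro i _ _; positivity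
      _ = D := hDeq.symm
  -- total sum
  have hsplit : ∑ k ∈ Finset.Icc (r + 1) t, f k ≤ 1 + D := by
    rw [show Finset.Icc (r + 1) t = Finset.Ioc r t from Finset.Icc_add_one_left_eq_Ioc r t,
      ← Finset.sum_Ioc_consecutive f hru hut]
    linarith [part1, part2]
  have hSnn : 0 ≤ ∑ k ∈ Finset.Icc (r + 1) t, f k :=
    Finset.sum_nonneg fun i _ => hf0 i
  have hM1 : (1:ℝ) ≤ max 1 D := le_max_left _ _
  have hM2 : ∑ k ∈ Finset.Icc (r + 1) t, f k ≤ 2 * max 1 D := by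
    have := le_max_right 1 D
    linarith
  have hinvq : 0 < 1 / q := by positivity
  have h1 : (∑ k ∈ Finset.Icc (r + 1) t, f k) ^ (1/q) ≤ (2 * max 1 D) ^ (1/q) :=
    Real.rpow_le_rpow hSnn hM2 hinvq.le
  have h2 : (2 * max 1 D) ^ (1/q) = (2:ℝ) ^ (1/q) * (max 1 D) ^ (1/q) :=
    Real.mul_rpow (by norm_num) (by linarith)
  have h3 : (2:ℝ) ^ (1/q) ≤ 2 := by
    calc (2:ℝ) ^ (1/q) ≤ (2:ℝ) ^ (1:ℝ) :=
          Real.rpow_le_rpow_of_exponent_le one_le_two (by rw [div_le_one hq0]; linarith)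
      _ = 2 := Real.rpow_one 2
  have h4 : (max 1 D) ^ (1/q) = max 1 (D ^ (1/q)) := by
    rcases le_total D 1 with h | h
    · rw [max_eq_left h, Real.one_rpow,
        max_eq_left (Real.rpow_le_one hD0 h hinvq.le)]
    · rw [max_eq_right h]
      have : (1:ℝ) ≤ D ^ (1/q) := by
        calc (1:ℝ) = (1:ℝ) ^ (1/q) := (Real.one_rpow _).symm
          _ ≤ D ^ (1/q) := Real.rpow_le_rpow zero_le_one h hinvq.le
      rw [max_eq_right this]
  have h5 : (0:ℝ) ≤ (max 1 D) ^ (1/q) := Real.rpow_nonneg (by linarith) _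
  calc (∑ k ∈ Finset.Icc (r + 1) t, f k) ^ (1/q)
      ≤ (2:ℝ) ^ (1/q) * (max 1 D) ^ (1/q) := by rw [← h2]; exact h1
    _ ≤ 2 * (max 1 D) ^ (1/q) := mul_le_mul_of_nonneg_right h3 h5
    _ = 2 * max 1 (D ^ (1/q)) := by rw [h4]
end

section
/- Let (a_n)_{n=1}^∞ be a nonnegative non-increasing finitely supported sequence, and let (s_n) be a sequence of positive reals such that (s_n/n) is non-increasing. Then for every m ∈ ℕ: (s_m/m) ∑_{n=1}^{m} a_n ≤ ∑_{n=1}^{m} a_n (s_n − s_{n−1}), where s_0 = 0. -/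
theorem stmt11 (s : ℕ → ℝ) (hs0 : s 0 = 0) (hpos : ∀ n : ℕ, 1 ≤ n → 0 < s n)
    (hmono : ∀ n : ℕ, s n ≤ s (n + 1))
    (hreg : ∀ m n : ℕ, 1 ≤ m → m ≤ n → s n / (n : ℝ) ≤ s m / (m : ℝ))
    (a : ℕ → ℝ) (ha0 : ∀ n, 0 ≤ a n) (hamono : ∀ n : ℕ, 1 ≤ n → a (n + 1) ≤ a n)
    (hfin : ∃ N : ℕ, ∀ n : ℕ, N < n → a n = 0)
    (m : ℕ) (hm : 1 ≤ m) :
    s m / (m : ℝ) * ∑ n ∈ Finset.Icc 1 m, a n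
      ≤ ∑ n ∈ Finset.Icc 1 m, a n * (s n - s (n - 1)) := by
  have hanti : ∀ k n : ℕ, 1 ≤ k → k ≤ n → a n ≤ a k := by
    intro k n hk hkn
    induction n, hkn using Nat.le_induction with
    | base => exact le_rfl
    | succ n hn ih => exact le_trans (hamono n (le_trans hk hn)) ih
  induction m, hm using Nat.le_induction with
  | base =>
    simp [hs0, mul_comm]
  | succ m hm ih =>
    rw [Finset.sum_Icc_succ_top (by omega), Finset.sum_Icc_succ_top (by omega)]
    set S := ∑ n ∈ Finset.Icc 1 m, a n with hS
    have hSnn : 0 ≤ S := Finset.sum_nonneg fun i _ => ha0 i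
    have hSge : (m : ℝ) * a (m + 1) ≤ S := by
      calc (m : ℝ) * a (m + 1) = ∑ n ∈ Finset.Icc 1 m, a (m + 1) := by
            simp [Nat.card_Icc]
        _ ≤ S := Finset.sum_le_sum fun i hi => by
            simp only [Finset.mem_Icc] at hi
            exact hanti i (m + 1) hi.1 (by omega)
    have h1 : s (m + 1) / ((m : ℝ) + 1) ≤ s m / m := by
      have := hreg m (m + 1) hm (by omega)
      push_cast at this ⊢
      exact this
    have hmpos : (0 : ℝ) < m := by exact_mod_cast Nat.pos_of_ne_zero (by omega)
    have hm1pos : (0 : ℝ) < (m : ℝ) + 1 := by linarith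
    have hsm : 0 < s m := hpos m hm
    have hstep : s m ≤ s (m + 1) := hmono m
    have ha1 : 0 ≤ a (m + 1) := ha0 (m + 1)
    have key : (m : ℝ) * s (m + 1) ≤ ((m : ℝ) + 1) * s m := by
      rw [div_le_div_iff₀ hm1pos hmpos] at h1
      linarith
    have hcast : ((m + 1 : ℕ) : ℝ) = (m : ℝ) + 1 := by push_cast; ring
    simp only [hcast, Nat.add_sub_cancel]
    rw [div_mul_eq_mul_div, div_le_iff₀ hm1pos]
    rw [div_mul_eq_mul_div, div_le_iff₀ hmpos] at ih
    -- goal: s (m+1) * (S + a (m+1)) ≤ (RHS + a(m+1)*(s(m+1)-s m)) * (m+1)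
    set R := ∑ n ∈ Finset.Icc 1 m, a n * (s n - s (n - 1)) with hR
    nlinarith [mul_le_mul_of_nonneg_left hSge (le_of_lt hsm),
      mul_le_mul_of_nonneg_right key ha1, mul_le_mul_of_nonneg_left key hSnn]
end
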